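/- arXiv:1801.07616 — 4 statements merged into one kernel-verified Lean document; each statement's English description precedes it below -/
import Mathlib

section
/- Let B(z) = λ (z^n - c^n)/(1 - \bar{c}^n z^n) with |λ| = 1 and c ∈ D, and let φ(z) = e^{iπ/n} z / (1 - \bar{c}^n z^n)^{1/n} (with a holomorphic branch of the n-th root on D equal to 1 at 0). Then for all z ∈ D, B(φ(z)) = λ (|c|^{2n} - 1) z^n - λ c^n. In particular, the polynomial p(z) = λ(|c|^{2n}-1) z^n - λ c^n satisfies B ∘ φ = p on D. -/
open Complex ComplexConjugate

/-- The open unit disk in the complex plane. -/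
def unitDisk : Set ℂ := {z : ℂ | ‖z‖ < 1}

/-! Writing `a = cⁿ`, `B` is the Möbius map `u ↦ λ (u - a) / (1 - ā u)` composed with `z ↦ zⁿ`,
and `φ(z)ⁿ = -zⁿ / (1 - ā zⁿ)` because `e^{iπ/n}` is an `n`-th root of `-1`. Substituting,
the Möbius map collapses to the affine map `t ↦ (|a|² - 1) t - a` of `t = zⁿ`. -/

theorem div_one_sub_mul_comp_neg_div_one_sub_mul {K : Type*} [Field K] {a b t : K}
    (ht : 1 - b * t ≠ 0) :
    (-t / (1 - b * t) - a) / (1 - b * (-t / (1 - b * t))) = (a * b - 1) * t - a := by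
  have hden : 1 - b * (-t / (1 - b * t)) = (1 - b * t)⁻¹ := by
    field_simp
    ring
  rw [hden, div_inv_eq_mul, sub_mul, div_mul_cancel₀ _ ht]
  ring

theorem exp_pi_mul_I_div_pow {n : ℕ} (hn : n ≠ 0) : exp (Real.pi * I / n) ^ n = -1 := by
  rw [← exp_nat_mul, mul_div_cancel₀ _ (Nat.cast_ne_zero.mpr hn), exp_pi_mul_I]

theorem one_sub_conj_pow_mul_pow_ne_zero {c z : ℂ} (hc : ‖c‖ < 1) (hz : ‖z‖ ≤ 1) {n : ℕ}
    (hn : n ≠ 0) : 1 - conj c ^ n * z ^ n ≠ 0 := by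
  have hlt : ‖conj c ^ n * z ^ n‖ < 1 := by
    rw [← mul_pow, norm_pow, norm_mul, norm_conj]
    exact pow_lt_one₀ (by positivity) (mul_lt_one_of_nonneg_of_lt_one_left (norm_nonneg c) hc hz) hn
  intro h
  rw [← sub_eq_zero.mp h, norm_one] at hlt
  exact hlt.false

theorem stmt2_general (n : ℕ) (hn : 2 ≤ n) (lam c : ℂ)
    (hc : c ∈ unitDisk)
    (ρ : ℂ → ℂ)
    (hρpow : ∀ z ∈ unitDisk, ρ z ^ n = 1 - (starRingEnd ℂ) c ^ n * z ^ n)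
    (B φ p : ℂ → ℂ)
    (hB : ∀ z : ℂ, B z = lam * (z ^ n - c ^ n) / (1 - (starRingEnd ℂ) c ^ n * z ^ n))
    (hφ : ∀ z : ℂ, φ z = Complex.exp (↑Real.pi * Complex.I / n) * z / ρ z)
    (hp : ∀ z : ℂ, p z = lam * (((‖c‖ : ℝ) : ℂ) ^ (2 * n) - 1) * z ^ n - lam * c ^ n) :
    ∀ z ∈ unitDisk, B (φ z) = p z := by
  intro z hz
  have hn0 : n ≠ 0 := by omega
  have hd := one_sub_conj_pow_mul_pow_ne_zero hc (le_of_lt hz) hn0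
  have hφn : φ z ^ n = -z ^ n / (1 - conj c ^ n * z ^ n) := by
    rw [hφ, div_pow, mul_pow, exp_pi_mul_I_div_pow hn0, hρpow z hz, neg_one_mul]
  have hnorm : ((‖c‖ : ℝ) : ℂ) ^ (2 * n) = c ^ n * conj c ^ n := by
    rw [pow_mul, ← mul_conj', mul_pow]
  rw [hB, hp, hφn, hnorm, mul_div_assoc, div_one_sub_mul_comp_neg_div_one_sub_mul hd]
  ring

/-- Let `B(z) = λ (z^n - c^n)/(1 - conj c ^ n * z^n)` with `|λ| = 1` and
`c` in the unit disk, and let `φ(z) = e^{iπ/n} z / ρ(z)` where `ρ` is a holomorphic branch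
on the disk of the n-th root of `1 - conj c ^ n * z ^ n` with `ρ(0) = 1`. Then for all `z`
in the disk, `B(φ(z)) = λ (|c|^{2n} - 1) z^n - λ c^n`; i.e. the polynomial
`p(z) = λ(|c|^{2n}-1) z^n - λ c^n` satisfies `B ∘ φ = p` on the disk. -/
theorem stmt2 (n : ℕ) (hn : 2 ≤ n) (lam c : ℂ) (hlam : ‖lam‖ = 1)
    (hc : c ∈ unitDisk)
    (ρ : ℂ → ℂ) (hρdiff : DifferentiableOn ℂ ρ unitDisk)
    (hρpow : ∀ z ∈ unitDisk, ρ z ^ n = 1 - (starRingEnd ℂ) c ^ n * z ^ n)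
    (hρ0 : ρ 0 = 1)
    (B φ p : ℂ → ℂ)
    (hB : ∀ z : ℂ, B z = lam * (z ^ n - c ^ n) / (1 - (starRingEnd ℂ) c ^ n * z ^ n))
    (hφ : ∀ z : ℂ, φ z = Complex.exp (↑Real.pi * Complex.I / n) * z / ρ z)
    (hp : ∀ z : ℂ, p z = lam * (((‖c‖ : ℝ) : ℂ) ^ (2 * n) - 1) * z ^ n - lam * c ^ n) :
    ∀ z ∈ unitDisk, B (φ z) = p z :=
  stmt2_general n hn lam c hc ρ hρpow B φ p hB hφ hp
end

section
/- Let B be a degree three finite Blaschke product whose two critical points z₁, z₂ in the open unit disk D are distinct. If ψ : D → D is a holomorphic automorphism of D satisfying B ∘ ψ = B on D, then ψ is the identity map. -/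
open Complex

/-!
Write `B' = lam * N / ∏ⱼ (1 - conj aⱼ * z) ^ 2`. The numerator `N` is a polynomial of degree at most
`4`, its roots are symmetric under the reflection `z ↦ (conj z)⁻¹` in the unit circle, and `N 1 > 0`;
so three critical points in the disk would give `N` five roots. Hence `z₁, z₂` are the only critical
points of `B` in the disk, and by the chain rule applied to `B ∘ ψ = B` the automorphism `ψ` permutes
them. If `ψ` fixes both, Schwarz's lemma makes it the identity. If `ψ` swaps them, then `ψ ∘ ψ = id`,
so `ψ` has a fixed point `c` (either `ψ 0 = 0`, or `ψ` is the Möbius involution exchanging `0` and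
`ψ 0`). Since `c` is not critical, `B ∘ ψ = B` forces `ψ' c = 1`, and Cartan's uniqueness theorem
gives `ψ = id`, contradicting the swap.
-/

open Metric Polynomial Finset
open Set (MapsTo EqOn)
open scoped ComplexConjugate

theorem unitDisk_eq_ball : unitDisk = ball 0 1 := by
  ext z
  simp [unitDisk]

theorem isOpen_unitDisk : IsOpen unitDisk :=
  unitDisk_eq_ball ▸ isOpen_ball

theorem zero_mem_unitDisk : (0 : ℂ) ∈ unitDisk := by
  simp [unitDisk]

theorem one_sub_conj_mul_ne_zero {a z : ℂ} (ha : a ∈ unitDisk) (hz : z ∈ unitDisk) :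
    1 - conj a * z ≠ 0 := by
  have hlt : ‖conj a * z‖ < 1 := by
    rw [norm_mul, RCLike.norm_conj]
    exact mul_lt_one_of_nonneg_of_lt_one_left (norm_nonneg a) ha hz.le
  intro h
  rw [← eq_of_sub_eq_zero h, norm_one] at hlt
  exact hlt.false

theorem norm_one_sub_conj_mul_sq_sub_norm_sub_sq (a z : ℂ) :
    ‖1 - conj a * z‖ ^ 2 - ‖a - z‖ ^ 2 = (1 - ‖a‖ ^ 2) * (1 - ‖z‖ ^ 2) := by
  simp only [← normSq_eq_norm_sq, normSq_apply, sub_re, sub_im, one_re, one_im, mul_re, mul_im,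
    conj_re, conj_im]
  ring

noncomputable def blaschkeFactor (a z : ℂ) : ℂ := (z - a) / (1 - conj a * z)

theorem hasDerivAt_blaschkeFactor {a z : ℂ} (h : 1 - conj a * z ≠ 0) :
    HasDerivAt (blaschkeFactor a) ((1 - conj a * a) / (1 - conj a * z) ^ 2) z := by
  have := ((hasDerivAt_id z).sub_const a).div
    (((hasDerivAt_id z).const_mul (conj a)).const_sub 1) h
  exact this.congr_deriv (by simp only [id]; ring)

noncomputable def diskSwap (a z : ℂ) : ℂ := (a - z) / (1 - conj a * z)

section diskSwap

variable {a z : ℂ}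

@[simp] theorem diskSwap_self (a : ℂ) : diskSwap a a = 0 := by simp [diskSwap]

@[simp] theorem diskSwap_zero (a : ℂ) : diskSwap a 0 = a := by simp [diskSwap]

theorem diskSwap_mem_unitDisk (ha : a ∈ unitDisk) (hz : z ∈ unitDisk) :
    diskSwap a z ∈ unitDisk := by
  have hden := one_sub_conj_mul_ne_zero ha hz
  have hlt : ‖a - z‖ ^ 2 < ‖1 - conj a * z‖ ^ 2 := by
    have h₁ : ‖a‖ ^ 2 < 1 := by nlinarith [norm_nonneg a, ha.out]
    have h₂ : ‖z‖ ^ 2 < 1 := by nlinarith [norm_nonneg z, hz.out]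
    nlinarith [norm_one_sub_conj_mul_sq_sub_norm_sub_sq a z, mul_pos (sub_pos.2 h₁) (sub_pos.2 h₂)]
  show ‖diskSwap a z‖ < 1
  rw [diskSwap, norm_div, div_lt_one (norm_pos_iff.2 hden)]
  exact (sq_lt_sq₀ (norm_nonneg _) (norm_nonneg _)).1 hlt

theorem mapsTo_diskSwap (ha : a ∈ unitDisk) : MapsTo (diskSwap a) unitDisk unitDisk :=
  fun _ hz ↦ diskSwap_mem_unitDisk ha hz

theorem diskSwap_diskSwap (ha : a ∈ unitDisk) (hz : z ∈ unitDisk) :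
    diskSwap a (diskSwap a z) = z := by
  have h₁ := one_sub_conj_mul_ne_zero ha hz
  have h₂ := one_sub_conj_mul_ne_zero ha ha
  have hden : 1 - conj a * diskSwap a z = (1 - conj a * a) / (1 - conj a * z) := by
    rw [diskSwap]; field_simp; ring
  rw [diskSwap, hden, div_div_eq_mul_div, diskSwap, sub_mul, div_mul_cancel₀ _ h₁,
    div_eq_iff h₂]
  ring

theorem diskSwap_eq_iff (ha : a ∈ unitDisk) {z w : ℂ} (hz : z ∈ unitDisk) (hw : w ∈ unitDisk) :
    diskSwap a z = diskSwap a w ↔ z = w := by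
  refine ⟨fun h ↦ ?_, congrArg _⟩
  rw [← diskSwap_diskSwap ha hz, h, diskSwap_diskSwap ha hw]

theorem diskSwap_eq_neg_blaschkeFactor (a : ℂ) : diskSwap a = -blaschkeFactor a := by
  ext z
  rw [Pi.neg_apply, diskSwap, blaschkeFactor, ← neg_div, neg_sub]

theorem hasDerivAt_diskSwap (h : 1 - conj a * z ≠ 0) :
    HasDerivAt (diskSwap a) (-((1 - conj a * a) / (1 - conj a * z) ^ 2)) z :=
  diskSwap_eq_neg_blaschkeFactor a ▸ (hasDerivAt_blaschkeFactor h).neg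

theorem differentiableOn_diskSwap (ha : a ∈ unitDisk) : DifferentiableOn ℂ (diskSwap a) unitDisk :=
  fun _ hz ↦ (hasDerivAt_diskSwap (one_sub_conj_mul_ne_zero ha hz)).differentiableAt
    |>.differentiableWithinAt

end diskSwap

section SelfMap

variable {f : ℂ → ℂ}

theorem eqOn_id_of_dslope_eq_one (hd : DifferentiableOn ℂ f unitDisk)
    (hm : MapsTo f unitDisk unitDisk) (h0 : f 0 = 0) {z₀ : ℂ} (hz₀ : z₀ ∈ unitDisk)
    (hs : dslope f 0 z₀ = 1) : EqOn f id unitDisk := by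
  rw [unitDisk_eq_ball] at hd hm hz₀ ⊢
  have hm' : MapsTo f (ball 0 1) (closedBall (f 0) 1) := by
    rw [h0]; exact hm.mono_right ball_subset_closedBall
  have := Complex.affine_of_mapsTo_ball_of_norm_dslope_eq_div hd hm' hz₀ (by simp [hs])
  intro z hz
  simpa [h0, hs] using this hz

theorem mapsTo_diskSwap_conj {p : ℂ} (hp : p ∈ unitDisk) (hm : MapsTo f unitDisk unitDisk) :
    MapsTo (diskSwap p ∘ f ∘ diskSwap p) unitDisk unitDisk :=
  (mapsTo_diskSwap hp).comp (hm.comp (mapsTo_diskSwap hp))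

theorem differentiableOn_diskSwap_conj {p : ℂ} (hp : p ∈ unitDisk)
    (hd : DifferentiableOn ℂ f unitDisk) (hm : MapsTo f unitDisk unitDisk) :
    DifferentiableOn ℂ (diskSwap p ∘ f ∘ diskSwap p) unitDisk :=
  (differentiableOn_diskSwap hp).comp (hd.comp (differentiableOn_diskSwap hp)
    (mapsTo_diskSwap hp)) (hm.comp (mapsTo_diskSwap hp))

theorem eqOn_id_of_diskSwap_conj {p : ℂ} (hp : p ∈ unitDisk) (hm : MapsTo f unitDisk unitDisk)
    (h : EqOn (diskSwap p ∘ f ∘ diskSwap p) id unitDisk) : EqOn f id unitDisk := by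
  intro z hz
  have := h (diskSwap_mem_unitDisk hp hz)
  simp only [Function.comp_apply, id, diskSwap_diskSwap hp hz] at this
  exact (diskSwap_eq_iff hp (hm hz) hz).1 this

theorem eqOn_id_of_two_fixedPoints (hd : DifferentiableOn ℂ f unitDisk)
    (hm : MapsTo f unitDisk unitDisk) {p q : ℂ} (hp : p ∈ unitDisk) (hq : q ∈ unitDisk)
    (hpq : p ≠ q) (hfp : f p = p) (hfq : f q = q) : EqOn f id unitDisk := by
  refine eqOn_id_of_diskSwap_conj hp hm ?_
  set g := diskSwap p ∘ f ∘ diskSwap p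
  set q' := diskSwap p q
  have hq'0 : q' ≠ 0 := by
    rw [← diskSwap_self p]
    exact fun h ↦ hpq ((diskSwap_eq_iff hp hq hp).1 h).symm
  have hg0 : g 0 = 0 := by simp [g, hfp]
  have hgq' : g q' = q' := by simp [g, q', diskSwap_diskSwap hp hq, hfq]
  refine eqOn_id_of_dslope_eq_one (differentiableOn_diskSwap_conj hp hd hm)
    (mapsTo_diskSwap_conj hp hm) hg0 (diskSwap_mem_unitDisk hp hq) ?_
  rw [dslope_of_ne _ hq'0, slope_def_field, hgq', hg0, sub_zero, div_self hq'0]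

theorem eqOn_id_of_fixedPoint_of_deriv_eq_one (hd : DifferentiableOn ℂ f unitDisk)
    (hm : MapsTo f unitDisk unitDisk) {c : ℂ} (hc : c ∈ unitDisk) (hfc : f c = c)
    (hf' : deriv f c = 1) : EqOn f id unitDisk := by
  refine eqOn_id_of_diskSwap_conj hc hm ?_
  have hc₀ : 1 - conj c * c ≠ 0 := one_sub_conj_mul_ne_zero hc hc
  have hfc' : HasDerivAt f 1 c := by
    simpa [hf'] using ((hd c hc).differentiableAt (isOpen_unitDisk.mem_nhds hc)).hasDerivAt
  have hg' := HasDerivAt.comp_of_eq 0 (hasDerivAt_diskSwap hc₀)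
    (HasDerivAt.comp_of_eq 0 hfc' (hasDerivAt_diskSwap (a := c) (z := 0) (by simp))
      (diskSwap_zero c).symm)
    (by simp [hfc])
  refine eqOn_id_of_dslope_eq_one (differentiableOn_diskSwap_conj hc hd hm)
    (mapsTo_diskSwap_conj hc hm) (by simp [hfc]) zero_mem_unitDisk ?_
  rw [dslope_same, hg'.deriv]
  field_simp
  ring

theorem exists_diskSwap_fixedPoint {a : ℂ} (ha : a ∈ unitDisk) :
    ∃ c ∈ unitDisk, diskSwap a c = c := by
  set s := √(1 - ‖a‖ ^ 2)
  have hs : (s : ℂ) ^ 2 = 1 - ‖a‖ ^ 2 := by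
    have : s ^ 2 = 1 - ‖a‖ ^ 2 := Real.sq_sqrt (by nlinarith [norm_nonneg a, ha.out])
    exact_mod_cast this
  have h1s : 1 ≤ ‖(1 + s : ℂ)‖ := by
    rw [show (1 + s : ℂ) = ((1 + s : ℝ) : ℂ) by push_cast; rfl,
      Complex.norm_of_nonneg (by positivity)]
    linarith [Real.sqrt_nonneg (1 - ‖a‖ ^ 2)]
  -- `a / (1 + s)` is the root in the disk of `conj a * c ^ 2 - 2 * c + a = 0`
  have hc : a / (1 + s) ∈ unitDisk := by
    show ‖a / (1 + s)‖ < 1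
    rw [norm_div, div_lt_one (by linarith)]
    linarith [ha.out]
  refine ⟨_, hc, ?_⟩
  have : (1 + s : ℂ) ≠ 0 := norm_pos_iff.1 (by linarith)
  rw [diskSwap, div_eq_iff (one_sub_conj_mul_ne_zero ha hc)]
  field_simp
  linear_combination a * hs + a * mul_conj' a

theorem exists_fixedPoint_of_involutive (hd : DifferentiableOn ℂ f unitDisk)
    (hm : MapsTo f unitDisk unitDisk) (hinv : ∀ z ∈ unitDisk, f (f z) = z) :
    ∃ c ∈ unitDisk, f c = c := by
  by_cases h0 : f 0 = 0
  · exact ⟨0, zero_mem_unitDisk, h0⟩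
  set a := f 0
  have ha : a ∈ unitDisk := hm zero_mem_unitDisk
  have hswap : EqOn (diskSwap a ∘ f) id unitDisk :=
    eqOn_id_of_two_fixedPoints ((differentiableOn_diskSwap ha).comp hd hm)
      ((mapsTo_diskSwap ha).comp hm) zero_mem_unitDisk ha (Ne.symm h0) (diskSwap_self a)
      (by simp [show f a = 0 from hinv 0 zero_mem_unitDisk])
  obtain ⟨c, hc, hfix⟩ := exists_diskSwap_fixedPoint ha
  refine ⟨c, hc, ?_⟩
  calc f c = diskSwap a ((diskSwap a ∘ f) c) := (diskSwap_diskSwap ha (hm hc)).symm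
    _ = diskSwap a c := congrArg (diskSwap a) (hswap hc)
    _ = c := hfix

theorem exists_fixedPoint_deriv_ne_one_of_swap (hd : DifferentiableOn ℂ f unitDisk)
    (hm : MapsTo f unitDisk unitDisk) {p q : ℂ} (hp : p ∈ unitDisk) (hq : q ∈ unitDisk)
    (hpq : p ≠ q) (hfp : f p = q) (hfq : f q = p) :
    ∃ c ∈ unitDisk, f c = c ∧ deriv f c ≠ 1 := by
  have hinv : ∀ z ∈ unitDisk, f (f z) = z :=
    eqOn_id_of_two_fixedPoints (hd.comp hd hm) (hm.comp hm) hp hq hpq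
      (by simp [hfp, hfq]) (by simp [hfp, hfq])
  obtain ⟨c, hc, hfc⟩ := exists_fixedPoint_of_involutive hd hm hinv
  exact ⟨c, hc, hfc, fun h' ↦
    hpq ((eqOn_id_of_fixedPoint_of_deriv_eq_one hd hm hc hfc h' hp).symm.trans hfp)⟩

end SelfMap

theorem two_mul_card_sub_one_le_natDegree {p : ℂ[X]} (hp : p ≠ 0)
    (hrefl : ∀ z, z ≠ 0 → p.IsRoot z → p.IsRoot (conj z)⁻¹) {s : Finset ℂ}
    (hs : ∀ z ∈ s, z ∈ unitDisk ∧ p.IsRoot z) : 2 * #s - 1 ≤ p.natDegree := by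
  set t := (s.erase 0).image fun z ↦ (conj z)⁻¹
  have hdisj : Disjoint s t := by
    refine disjoint_right.2 fun w hw hws ↦ ?_
    obtain ⟨z, hz, rfl⟩ := mem_image.1 hw
    have hz0 : z ≠ 0 := ne_of_mem_erase hz
    have hz1 : ‖z‖ < 1 := (hs z (mem_of_mem_erase hz)).1
    have hw1 : ‖(conj z)⁻¹‖ < 1 := (hs _ hws).1
    rw [norm_inv, RCLike.norm_conj, inv_lt_one₀ (norm_pos_iff.2 hz0)] at hw1
    exact hz1.not_gt hw1
  have hcard : #t = #(s.erase 0) :=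
    card_image_of_injective _ (inv_injective.comp (RingHom.injective _))
  have hroots : (s ∪ t).val ⊆ p.roots := by
    intro w hw
    rw [mem_roots hp]
    rcases mem_union.1 hw with hw | hw
    · exact (hs w hw).2
    · obtain ⟨z, hz, rfl⟩ := mem_image.1 hw
      exact hrefl z (ne_of_mem_erase hz) (hs z (mem_of_mem_erase hz)).2
  have hle := card_le_degree_of_subset_roots hroots
  rw [card_union_of_disjoint hdisj, hcard] at hle
  have := pred_card_le_card_erase (s := s) (a := 0)
  omega

noncomputable def blaschke {ι : Type*} [Fintype ι] (lam : ℂ) (a : ι → ℂ) (z : ℂ) : ℂ :=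
  lam * ∏ j, blaschkeFactor (a j) z

section Blaschke

variable {ι : Type*} [Fintype ι] [DecidableEq ι]

/-- The numerator of `deriv (blaschke lam a) / lam` over the denominator
`∏ j, (1 - conj (a j) * z) ^ 2`. -/
noncomputable def blaschkeCritPoly (a : ι → ℂ) : ℂ[X] :=
  ∑ i, C (1 - conj (a i) * a i) * ∏ j ∈ univ.erase i, (X - C (a j)) * (1 - C (conj (a j)) * X)

theorem eval_blaschkeCritPoly (a : ι → ℂ) (z : ℂ) :
    (blaschkeCritPoly a).eval z =
      ∑ i, (1 - conj (a i) * a i) * ∏ j ∈ univ.erase i, (z - a j) * (1 - conj (a j) * z) := by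
  simp [blaschkeCritPoly, eval_finsetSum, eval_prod]

theorem natDegree_blaschkeCritPoly_le (a : ι → ℂ) :
    (blaschkeCritPoly a).natDegree ≤ 2 * (Fintype.card ι - 1) := by
  have hfactor (j : ι) : ((X - C (a j)) * (1 - C (conj (a j)) * X)).natDegree ≤ 2 := by
    compute_degree
  refine natDegree_sum_le_of_forall_le _ _ fun i _ ↦ (natDegree_C_mul_le _ _).trans ?_
  refine (natDegree_prod_le _ _).trans ((sum_le_card_nsmul _ _ 2 fun j _ ↦ hfactor j).trans ?_)
  rw [card_erase_of_mem (mem_univ i), card_univ, smul_eq_mul, mul_comm]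

theorem hasDerivAt_blaschke (lam : ℂ) (a : ι → ℂ) {z : ℂ} (hz : ∀ j, 1 - conj (a j) * z ≠ 0) :
    HasDerivAt (blaschke lam a)
      (lam * (blaschkeCritPoly a).eval z / ∏ j, (1 - conj (a j) * z) ^ 2) z := by
  have := (HasDerivAt.fun_finsetProd (u := univ)
    fun j _ ↦ hasDerivAt_blaschkeFactor (hz j)).const_mul lam
  refine this.congr_deriv ?_
  rw [mul_div_assoc, eval_blaschkeCritPoly, sum_div]
  congr 1
  refine sum_congr rfl fun i _ ↦ ?_
  have hE : ∏ j ∈ univ.erase i, (1 - conj (a j) * z) ≠ 0 := prod_ne_zero_iff.2 fun j _ ↦ hz j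
  have hi := hz i
  rw [← mul_prod_erase univ (fun j ↦ (1 - conj (a j) * z) ^ 2) (mem_univ i)]
  simp only [smul_eq_mul, blaschkeFactor, prod_div_distrib, prod_mul_distrib, Finset.prod_pow]
  field_simp

theorem isRoot_blaschkeCritPoly_of_deriv_eq_zero {lam : ℂ} (hlam : lam ≠ 0) {a : ι → ℂ}
    (ha : ∀ j, a j ∈ unitDisk) {z : ℂ} (hz : z ∈ unitDisk) (h : deriv (blaschke lam a) z = 0) :
    (blaschkeCritPoly a).IsRoot z := by
  have hden (j : ι) := one_sub_conj_mul_ne_zero (ha j) hz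
  rw [(hasDerivAt_blaschke lam a hden).deriv, div_eq_zero_iff, mul_eq_zero] at h
  exact (h.resolve_right (prod_ne_zero_iff.2 fun j _ ↦ pow_ne_zero 2 (hden j))).resolve_left hlam

theorem differentiableOn_blaschke (lam : ℂ) {a : ι → ℂ} (ha : ∀ j, a j ∈ unitDisk) :
    DifferentiableOn ℂ (blaschke lam a) unitDisk := fun _ hz ↦
  (hasDerivAt_blaschke lam a fun j ↦ one_sub_conj_mul_ne_zero (ha j) hz).differentiableAt
    |>.differentiableWithinAt

theorem blaschkeCritPoly_ne_zero [Nonempty ι] {a : ι → ℂ} (ha : ∀ j, a j ∈ unitDisk) :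
    blaschkeCritPoly a ≠ 0 := by
  -- at `z = 1` every summand is a positive real number
  have h1 : (blaschkeCritPoly a).eval 1 =
      ((∑ i, (1 - ‖a i‖ ^ 2) * ∏ j ∈ univ.erase i, ‖1 - a j‖ ^ 2 : ℝ) : ℂ) := by
    push_cast
    simp only [eval_blaschkeCritPoly, conj_mul', mul_one, ← mul_conj', map_sub, map_one]
  have hpos : 0 < ∑ i, (1 - ‖a i‖ ^ 2) * ∏ j ∈ univ.erase i, ‖1 - a j‖ ^ 2 := by
    refine sum_pos (fun i _ ↦ mul_pos ?_ (prod_pos fun j _ ↦ ?_)) univ_nonempty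
    · nlinarith [norm_nonneg (a i), (ha i).out]
    · have : a j ≠ 1 := fun h ↦ by simpa [h] using (ha j).out
      exact pow_pos (norm_pos_iff.2 (sub_ne_zero.2 this.symm)) 2
  intro h0
  rw [h0, eval_zero] at h1
  exact hpos.ne' (by exact_mod_cast h1.symm)

theorem eval_inv_conj_blaschkeCritPoly (a : ι → ℂ) {z : ℂ} (hz : z ≠ 0) :
    (blaschkeCritPoly a).eval (conj z)⁻¹ * conj z ^ (2 * (Fintype.card ι - 1)) =
      conj ((blaschkeCritPoly a).eval z) := by
  have hz' : conj z ≠ 0 := (_root_.map_ne_zero _).2 hz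
  rw [eval_blaschkeCritPoly, eval_blaschkeCritPoly, sum_mul, map_sum]
  refine sum_congr rfl fun i _ ↦ ?_
  have hpow : conj z ^ (2 * (Fintype.card ι - 1)) = ∏ j ∈ univ.erase i, conj z ^ 2 := by
    rw [prod_const, card_erase_of_mem (mem_univ i), card_univ, ← pow_mul, mul_comm]
  rw [hpow, mul_assoc, ← prod_mul_distrib, map_mul, map_prod]
  congr 1
  · simp only [map_sub, map_one, map_mul, conj_conj]
    ring
  · refine prod_congr rfl fun j _ ↦ ?_
    simp only [map_sub, map_one, map_mul, conj_conj]
    field_simp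

end Blaschke

theorem card_le_of_deriv_blaschke_eq_zero {ι : Type*} [Fintype ι] [Nonempty ι] {lam : ℂ}
    (hlam : lam ≠ 0) {a : ι → ℂ} (ha : ∀ j, a j ∈ unitDisk) {s : Finset ℂ}
    (hs : ∀ z ∈ s, z ∈ unitDisk ∧ deriv (blaschke lam a) z = 0) :
    #s ≤ Fintype.card ι - 1 := by
  classical
  have hrefl (z : ℂ) (hz : z ≠ 0) (hroot : (blaschkeCritPoly a).IsRoot z) :
      (blaschkeCritPoly a).IsRoot (conj z)⁻¹ := by
    have := eval_inv_conj_blaschkeCritPoly a hz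
    rw [hroot.eq_zero, map_zero, mul_eq_zero] at this
    exact this.resolve_right (pow_ne_zero _ ((_root_.map_ne_zero _).2 hz))
  have := two_mul_card_sub_one_le_natDegree (blaschkeCritPoly_ne_zero ha) hrefl
    fun z hz ↦ ⟨(hs z hz).1,
      isRoot_blaschkeCritPoly_of_deriv_eq_zero hlam ha (hs z hz).1 (hs z hz).2⟩
  have := natDegree_blaschkeCritPoly_le a
  omega

theorem deriv_mul_deriv_eq_of_comp_eqOn {g ψ : ℂ → ℂ} {U : Set ℂ} (hU : IsOpen U)
    (hg : DifferentiableOn ℂ g U) (hψ : DifferentiableOn ℂ ψ U) (hm : MapsTo ψ U U)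
    (hcomm : ∀ z ∈ U, g (ψ z) = g z) : ∀ v ∈ U, deriv g (ψ v) * deriv ψ v = deriv g v := by
  intro v hv
  have hgψ : (g ∘ ψ) =ᶠ[nhds v] g := Filter.eventually_of_mem (hU.mem_nhds hv) hcomm
  rw [← hgψ.deriv_eq, deriv_comp v ((hg _ (hm hv)).differentiableAt (hU.mem_nhds (hm hv)))
    ((hψ v hv).differentiableAt (hU.mem_nhds hv))]

theorem eqOn_id_of_comp_eqOn_of_two_criticalPoints {g ψ : ℂ → ℂ}
    (hg : DifferentiableOn ℂ g unitDisk) (hψ : DifferentiableOn ℂ ψ unitDisk)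
    (hbij : Set.BijOn ψ unitDisk unitDisk) (hcomm : ∀ z ∈ unitDisk, g (ψ z) = g z)
    {z₁ z₂ : ℂ} (hz₁ : z₁ ∈ unitDisk) (hz₂ : z₂ ∈ unitDisk) (hne : z₁ ≠ z₂)
    (hc₁ : deriv g z₁ = 0) (hc₂ : deriv g z₂ = 0)
    (hcrit : ∀ w ∈ unitDisk, deriv g w = 0 → w = z₁ ∨ w = z₂) : EqOn ψ id unitDisk := by
  have hchain := deriv_mul_deriv_eq_of_comp_eqOn isOpen_unitDisk hg hψ hbij.mapsTo hcomm
  have hpull (w : ℂ) (hw : w ∈ unitDisk) (h : deriv g (ψ w) = 0) : w = z₁ ∨ w = z₂ :=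
    hcrit w hw (by rw [← hchain w hw, h, zero_mul])
  obtain ⟨w₁, hw₁, hψw₁⟩ := hbij.surjOn hz₁
  obtain ⟨w₂, hw₂, hψw₂⟩ := hbij.surjOn hz₂
  obtain ⟨h₁, h₂⟩ | ⟨h₁, h₂⟩ : (ψ z₁ = z₁ ∧ ψ z₂ = z₂) ∨ (ψ z₁ = z₂ ∧ ψ z₂ = z₁) := by
    rcases hpull w₁ hw₁ (hψw₁ ▸ hc₁) with rfl | rfl <;>
      rcases hpull w₂ hw₂ (hψw₂ ▸ hc₂) with rfl | rfl <;> simp_all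
  · exact eqOn_id_of_two_fixedPoints hψ hbij.mapsTo hz₁ hz₂ hne h₁ h₂
  · obtain ⟨c, hc, hψc, hψ'c⟩ :=
      exists_fixedPoint_deriv_ne_one_of_swap hψ hbij.mapsTo hz₁ hz₂ hne h₁ h₂
    have hgc : deriv g c ≠ 0 := fun h ↦ by rcases hcrit c hc h with rfl | rfl <;> simp_all
    exact absurd ((mul_eq_left₀ hgc).1 (by simpa only [hψc] using hchain c hc)) hψ'c

/-- Let `B` be a degree three finite Blaschke product whose two critical
points `z₁ ≠ z₂` in the unit disk are distinct. If `ψ` is a holomorphic automorphism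
of the disk with `B ∘ ψ = B` on the disk, then `ψ` is the identity. -/
theorem stmt5 (lam : ℂ) (hlam : ‖lam‖ = 1)
    (a : Fin 3 → ℂ) (ha : ∀ j, a j ∈ unitDisk)
    (B : ℂ → ℂ)
    (hB : ∀ z : ℂ, B z = lam * ∏ j, (z - a j) / (1 - (starRingEnd ℂ) (a j) * z))
    (z₁ z₂ : ℂ) (hz₁ : z₁ ∈ unitDisk) (hz₂ : z₂ ∈ unitDisk) (hne : z₁ ≠ z₂)
    (hc₁ : deriv B z₁ = 0) (hc₂ : deriv B z₂ = 0)
    (ψ : ℂ → ℂ) (hψ : DifferentiableOn ℂ ψ unitDisk)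
    (hbij : Set.BijOn ψ unitDisk unitDisk)
    (hcomm : ∀ z ∈ unitDisk, B (ψ z) = B z) :
    Set.EqOn ψ id unitDisk := by
  obtain rfl : B = blaschke lam a := funext hB
  have hlam0 : lam ≠ 0 := by rintro rfl; simp at hlam
  refine eqOn_id_of_comp_eqOn_of_two_criticalPoints (differentiableOn_blaschke lam ha) hψ hbij
    hcomm hz₁ hz₂ hne hc₁ hc₂ fun w hw hw' ↦ ?_
  by_contra! h
  have := card_le_of_deriv_blaschke_eq_zero (s := {w, z₁, z₂}) hlam0 ha
    (by simp [hw, hz₁, hz₂, hw', hc₁, hc₂])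
  rw [card_insert_of_notMem (by simp [h.1, h.2]), card_pair hne] at this
  simp at this
end

section
/- If all critical values of a polynomial p of degree n ≥ 1 lie in the open unit disk D, then the sublevel set D_p = {z ∈ ℂ : |p(z)| < 1} is connected. -/
/-!
Away from the finite set `C` of its critical values, `p` is a covering map onto `ℂ \ C`, and its
total space `ℂ \ p⁻¹(C)` is path-connected. All of `C` lies in a disk of radius `R < 1`, so the
radial squeeze of `ℂ \ C` onto the closed disk of radius `R` is a homotopy that does not increase
norms. Hence every path in the base is homotopic, with endpoints sliding inside the unit disk, to a
path inside the unit disk `D`; lifting these paths shows that `p⁻¹(D \ C)` is connected, and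
`D_p` lies in its closure because `p⁻¹(C)` is finite.
-/

open Complex Polynomial

open unitInterval

namespace IsCoveringMap

variable {E X : Type*} [TopologicalSpace E] [TopologicalSpace X] {f : E → X}
  (cov : IsCoveringMap f) {V : Set X}
include cov

theorem joinedIn_monodromy {x y : X} {γ : Path x y} (hγ : ∀ t, γ t ∈ V) (e : f ⁻¹' {x}) :
    JoinedIn (f ⁻¹' V) e (cov.monodromy (.mk γ) e) := by
  have hγe : γ.toContinuousMap 0 = f e := by simpa using e.2.symm
  refine ⟨⟨cov.liftPath γ e hγe, cov.liftPath_zero .., rfl⟩, fun t => ?_⟩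
  show f (cov.liftPath γ e hγe t) ∈ V
  rw [← Function.comp_apply (f := f), cov.liftPath_lifts]
  exact hγ t

/-- Join `e₁` to `e₂` by a path `γ` in `E`. The square swept out by `F` along `f ∘ γ` shows that
`f ∘ γ` followed by the trajectory of `f e₂` is homotopic to a path inside `V`, so the lifts of the
trajectory of `f e₂` from `e₂` and of that path from `e₁` end at the same point. -/
theorem isPreconnected_preimage_of_homotopy [PathConnectedSpace E] {g : C(X, X)}
    (F : (ContinuousMap.id X).Homotopy g) (hF : ∀ t, ∀ x ∈ V, F (t, x) ∈ V)
    (hg : ∀ x, g x ∈ V) : IsPreconnected (f ⁻¹' V) := by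
  rcases (f ⁻¹' V).eq_empty_or_nonempty with h | h
  · rw [h]; exact isPreconnected_empty
  refine (isPathConnected_iff.2 ⟨h, fun e₁ h₁ e₂ h₂ => ?_⟩).isConnected.isPreconnected
  set γ : Path (f e₁) (f e₂) := (PathConnectedSpace.somePath e₁ e₂).map cov.continuous
  have hγ : cov.monodromy (.mk γ) ⟨e₁, rfl⟩ = ⟨e₂, rfl⟩ :=
    cov.monodromy_map (.mk (PathConnectedSpace.somePath e₁ e₂))
  have hsquare := Path.Homotopic.map_trans_evalAt F γ
  rw [← Path.Homotopic.Quotient.eq] at hsquare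
  have hend : cov.monodromy (.mk ((F.evalAt (f e₁)).trans (γ.map g.continuous))) ⟨e₁, rfl⟩ =
      cov.monodromy (.mk (F.evalAt (f e₂))) ⟨e₂, rfl⟩ := by
    rw [← hsquare, Path.Homotopic.Quotient.mk_trans, cov.monodromy_trans_apply]
    exact congr_arg _ hγ
  have hV : ∀ t, (F.evalAt (f e₁)).trans (γ.map g.continuous) t ∈ V := fun t => by
    rw [Path.trans_apply]
    split_ifs
    exacts [hF _ _ h₁, hg _]
  have h₁' := cov.joinedIn_monodromy hV ⟨e₁, rfl⟩
  rw [hend] at h₁'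
  exact h₁'.trans (cov.joinedIn_monodromy (fun t => hF t _ h₂) ⟨e₂, rfl⟩).symm

end IsCoveringMap

section RadialSqueeze

variable {E : Type*} [NormedAddCommGroup E] [NormedSpace ℝ E]

/-- For `R, s > 0`, rescales `w` to norm `min ‖w‖ (R / s)`. -/
noncomputable def radialSqueeze (R s : ℝ) (w : E) : E := (max 1 (s * ‖w‖ / R))⁻¹ • w

theorem continuous_radialSqueeze (R : ℝ) :
    Continuous fun q : ℝ × E => radialSqueeze R q.1 q.2 := by
  refine Continuous.smul (Continuous.inv₀ (by fun_prop) fun q => ?_) continuous_snd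
  exact (zero_lt_one.trans_le (le_max_left _ _)).ne'

@[simp] theorem radialSqueeze_zero (R : ℝ) (w : E) : radialSqueeze R 0 w = w := by
  simp [radialSqueeze]

theorem norm_radialSqueeze (R s : ℝ) (w : E) :
    ‖radialSqueeze R s w‖ = ‖w‖ / max 1 (s * ‖w‖ / R) := by
  have : 0 < max 1 (s * ‖w‖ / R) := zero_lt_one.trans_le (le_max_left _ _)
  rw [radialSqueeze, norm_smul, Real.norm_eq_abs, abs_inv, abs_of_pos this, inv_mul_eq_div]

theorem norm_radialSqueeze_le (R s : ℝ) (w : E) : ‖radialSqueeze R s w‖ ≤ ‖w‖ := by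
  rw [norm_radialSqueeze]
  exact div_le_self (norm_nonneg w) (le_max_left _ _)

theorem norm_radialSqueeze_one_le {R : ℝ} (hR : 0 < R) (w : E) :
    ‖radialSqueeze R 1 w‖ ≤ R := by
  rw [norm_radialSqueeze, div_le_iff₀ (zero_lt_one.trans_le (le_max_left _ _))]
  calc ‖w‖ = R * (1 * ‖w‖ / R) := by field_simp
    _ ≤ R * max 1 (1 * ‖w‖ / R) := by gcongr; exact le_max_right _ _

theorem radialSqueeze_eq_self_of_norm_lt {R s : ℝ} {w : E} (hR : 0 < R) (hs : s ≤ 1)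
    (h : ‖radialSqueeze R s w‖ < R) : radialSqueeze R s w = w := by
  rcases le_or_gt (s * ‖w‖ / R) 1 with hle | hlt
  · simp [radialSqueeze, max_eq_left hle]
  · rw [norm_radialSqueeze, max_eq_right hlt.le, div_lt_iff₀ (one_pos.trans hlt),
      mul_div_cancel₀ _ hR.ne'] at h
    exact absurd h (mul_le_of_le_one_left (norm_nonneg w) hs).not_gt

/-- A point moved by the radial squeeze lands outside the ball of radius `R`, so the squeeze
preserves the complement of any set inside that ball. -/
theorem exists_homotopy_compl_norm_le {S : Set E} {R : ℝ} (hR : 0 < R)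
    (hS : ∀ c ∈ S, ‖c‖ < R) :
    ∃ (g : C(↥Sᶜ, ↥Sᶜ)) (F : (ContinuousMap.id ↥Sᶜ).Homotopy g),
      (∀ t x, ‖(F (t, x) : E)‖ ≤ ‖(x : E)‖) ∧ ∀ x, ‖(g x : E)‖ ≤ R := by
  have hmaps (t : I) (x : ↥Sᶜ) : radialSqueeze R t (x : E) ∈ Sᶜ := fun hx => by
    rw [radialSqueeze_eq_self_of_norm_lt hR t.2.2 (hS _ hx)] at hx
    exact x.2 hx
  let H : C(I × ↥Sᶜ, ↥Sᶜ) :=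
    ⟨fun q => ⟨radialSqueeze R q.1 (q.2 : E), hmaps q.1 q.2⟩, by
      refine ((continuous_radialSqueeze R).comp
        (?_ : Continuous fun q : I × ↥Sᶜ => ((q.1 : ℝ), (q.2 : E)))).subtype_mk _
      fun_prop⟩
  refine ⟨⟨fun x => H (1, x), by fun_prop⟩, ⟨H, fun x => Subtype.ext ?_, fun x => rfl⟩,
    fun t x => norm_radialSqueeze_le _ _ _, fun x => norm_radialSqueeze_one_le hR _⟩
  exact radialSqueeze_zero R (x : E)

end RadialSqueeze

namespace Polynomial

variable {R : Type*} [CommRing R] [IsDomain R]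

def criticalValues (p : R[X]) : Set R :=
  (fun z => p.eval z) '' {z | p.derivative.eval z = 0}

theorem criticalValues_finite {p : R[X]} (hp : derivative p ≠ 0) :
    p.criticalValues.Finite :=
  (finite_setOfPred_isRoot hp).image _

theorem finite_preimage_eval {p : R[X]} (hp : 0 < p.natDegree) {s : Set R} (hs : s.Finite) :
    ((fun z => p.eval z) ⁻¹' s).Finite := by
  refine hs.preimage' fun c _ => ?_
  rw [preimage_eval_singleton fun h => by simp [h] at hp]
  exact rootSet_finite _ _

end Polynomial

/-- If all critical values of a polynomial `p` of degree `n ≥ 1` lie in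
the open unit disk, then the sublevel set `D_p = {z : |p(z)| < 1}` is connected. -/
theorem stmt12 (p : Polynomial ℂ) (hdeg : 1 ≤ p.natDegree)
    (hcrit : ∀ w : ℂ, (Polynomial.derivative p).eval w = 0 → ‖p.eval w‖ < 1) :
    IsConnected {z : ℂ | ‖p.eval z‖ < 1} := by
  set C := p.criticalValues
  have hC : C.Finite := criticalValues_finite fun h => by
    rw [derivative_eq_zero] at h; omega
  obtain ⟨R, ⟨hR0, hR1⟩, hCR⟩ := exists_pos_lt_subset_ball one_pos hC.isClosed
    (x := (0 : ℂ)) (by rintro _ ⟨w, hw, rfl⟩; simpa using hcrit w hw)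
  obtain ⟨g, F, hF, hg⟩ := exists_homotopy_compl_norm_le hR0 (S := C)
    fun c hc => by simpa using hCR hc
  have hpre : ((fun z => p.eval z) ⁻¹' C).Countable := (finite_preimage_eval hdeg hC).countable
  have : PathConnectedSpace ((fun z => p.eval z) ⁻¹' Cᶜ) :=
    isPathConnected_iff_pathConnectedSpace.1 <|
      hpre.isPathConnected_compl_of_one_lt_rank (by simp [Complex.rank_real_complex])
  have hconn := (p.isCoveringMapOn_eval.isCoveringMap_restrictPreimage Cᶜ
    ).isPreconnected_preimage_of_homotopy (V := {x | ‖(x : ℂ)‖ < 1}) F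
    (fun t x hx => (hF t x).trans_lt hx) (fun x => (hg x).trans_lt hR1)
  refine ⟨?_, (hconn.image _ continuous_subtype_val.continuousOn).subset_closure ?_ ?_⟩
  · obtain ⟨z, hz⟩ := exists_root (natDegree_pos_iff_degree_pos.1 hdeg)
    exact ⟨z, by simp [hz.eq_zero]⟩
  · rintro _ ⟨z, hz, rfl⟩
    exact hz
  · refine ((hpre.dense_compl ℝ).open_subset_closure_inter ?_).trans (closure_mono ?_)
    · exact isOpen_lt (by fun_prop) continuous_const
    · rintro z ⟨hz, hzC⟩
      exact ⟨⟨z, hzC⟩, hz, rfl⟩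
end

section
/- Let B be a finite Blaschke product of degree n ≥ 2 such that B' has a zero of order n-1 at the origin (i.e., all critical points of B in D are at 0). Then the zeros of B are the n-th roots of a single complex number; in particular they are equally spaced on a circle centered at the origin. -/
open Complex

/-!
Write `B = λ N / D` with `N = ∏ (X - a j)` and `D = ∏ (1 - conj (a j) X)`; `D` is the reflection
of the conjugate of `N`, so `D_k = conj N_{n-k}`. The vanishing of `B^{(k)}(0)` for `0 < k < n`
says that the polynomial `λ N - B(0) D` vanishes to order `n` at `0`, and as `B(0) = λ N_0` this
reads `N_k = N_0 conj N_{n-k}` for `0 < k < n`. Applying this twice gives `N_k = |N_0|² N_k`, and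
`|N_0| = ∏ |a j| < 1`, so `N = X^n + N_0`: the zeros of `B` are the `n`-th roots of `-N_0`.
-/

open Polynomial Filter Topology Finset ComplexConjugate
open scoped Nat

section IteratedDeriv

variable {𝕜 : Type*} [NontriviallyNormedField 𝕜]

theorem Polynomial.contDiff_eval (p : 𝕜[X]) (n : WithTop ℕ∞) :
    ContDiff 𝕜 n (fun x => p.eval x) :=
  p.contDiff_aeval n

theorem Polynomial.iteratedDeriv_eval (p : 𝕜[X]) (k : ℕ) :
    iteratedDeriv k (fun x => p.eval x) = fun x => (derivative^[k] p).eval x := by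
  induction k generalizing p with
  | zero => simp
  | succ k ih =>
    have hderiv : deriv (fun x => p.eval x) = fun x => p.derivative.eval x :=
      _root_.funext fun _ => p.deriv
    rw [iteratedDeriv_succ', Function.iterate_succ_apply, hderiv, ih]

theorem Polynomial.iteratedDeriv_eval_zero (p : 𝕜[X]) (k : ℕ) :
    iteratedDeriv k (fun x => p.eval x) 0 = k ! * p.coeff k := by
  rw [congrFun (iteratedDeriv_eval p k) 0, ← coeff_zero_eq_eval_zero, coeff_iterate_derivative,
    zero_add, Nat.descFactorial_self, nsmul_eq_mul]

theorem iteratedDeriv_mul_eq_zero {f g : 𝕜 → 𝕜} {x : 𝕜} {k : ℕ} (hf : ContDiffAt 𝕜 k f x)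
    (hg : ContDiffAt 𝕜 k g x) (hg0 : ∀ i ≤ k, iteratedDeriv i g x = 0) :
    iteratedDeriv k (f * g) x = 0 := by
  rw [iteratedDeriv_mul hf hg]
  exact sum_eq_zero fun i _ => by rw [hg0 (k - i) (Nat.sub_le k i), mul_zero]

theorem iteratedDeriv_sub_apply_eq_zero {f : 𝕜 → 𝕜} {x : 𝕜} {n : ℕ}
    (hf : ∀ k, 1 ≤ k → k < n → iteratedDeriv k f x = 0) :
    ∀ k < n, iteratedDeriv k (fun z => f z - f x) x = 0 := by
  intro k hk
  rcases Nat.eq_zero_or_pos k with rfl | hk0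
  · simp
  · simp_rw [sub_eq_neg_add, iteratedDeriv_const_add hk0, hf k hk0 hk]

theorem Polynomial.coeff_sub_C_mul_eq_zero [CharZero 𝕜] {p q : 𝕜[X]} {n : ℕ}
    (hq : q.eval 0 ≠ 0)
    (h : ∀ k, 1 ≤ k → k < n → iteratedDeriv k (fun z => p.eval z / q.eval z) 0 = 0) :
    ∀ k < n, (p - C (p.eval 0 / q.eval 0) * q).coeff k = 0 := by
  set f : 𝕜 → 𝕜 := fun z => p.eval z / q.eval z
  have hf : ContDiffAt 𝕜 n f 0 :=
    ((p.contDiff_eval n).contDiffAt).div ((q.contDiff_eval n).contDiffAt) hq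
  have hfactor : (fun z => (p - C (f 0) * q).eval z) =ᶠ[𝓝 0]
      (fun z => q.eval z) * fun z => f z - f 0 := by
    filter_upwards [(q.continuous.continuousAt (x := 0)).eventually_ne hq] with z hz
    simp only [eval_sub, eval_mul, eval_C, Pi.mul_apply, f]
    field_simp
  intro k hk
  have hkn : (k : WithTop ℕ∞) ≤ n := by exact_mod_cast hk.le
  have hderiv := iteratedDeriv_mul_eq_zero ((q.contDiff_eval k).contDiffAt)
    ((hf.sub contDiffAt_const).of_le hkn) fun i hi =>
      iteratedDeriv_sub_apply_eq_zero h i (hi.trans_lt hk)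
  rw [← hfactor.iteratedDeriv_eq, iteratedDeriv_eval_zero] at hderiv
  exact (mul_eq_zero.mp hderiv).resolve_left (Nat.cast_ne_zero.mpr k.factorial_ne_zero)

end IteratedDeriv

theorem Polynomial.reflect_prod_X_sub_C {R ι : Type*} [CommRing R] (s : Finset ι) (c : ι → R) :
    reflect #s (∏ j ∈ s, (X - C (c j))) = ∏ j ∈ s, (1 - C (c j) * X) := by
  classical
  induction s using Finset.induction_on with
  | empty => simp [reflect_one]
  | insert i s hi ih =>
    have hdeg : (∏ j ∈ s, (X - C (c j))).natDegree ≤ #s := by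
      refine (natDegree_prod_le _ _).trans ?_
      simpa using sum_le_card_nsmul s _ 1 fun j _ => natDegree_X_sub_C_le (c j)
    rw [prod_insert hi, prod_insert hi, card_insert_of_notMem hi, add_comm,
      reflect_mul _ _ (natDegree_X_sub_C_le _) hdeg, ih, sub_eq_add_neg, ← C_neg, reflect_add,
      reflect_one_X, reflect_C, pow_one, C_neg]
    ring

theorem Polynomial.eq_X_pow_add_C_of_coeff_eq_zero {R : Type*} [Semiring R] {p : R[X]} {n : ℕ}
    (hn : 0 < n) (hp : p.Monic) (hdeg : p.natDegree = n)
    (hcoeff : ∀ k, 1 ≤ k → k < n → p.coeff k = 0) :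
    p = X ^ n + C (p.coeff 0) := by
  ext m
  rw [coeff_add, coeff_X_pow, coeff_C]
  rcases lt_trichotomy m n with hm | rfl | hm
  · rcases Nat.eq_zero_or_pos m with rfl | hm0
    · simp [hn.ne]
    · simp [hcoeff m hm0 hm, hm.ne, hm0.ne']
  · rw [if_pos rfl, if_neg hn.ne', ← hdeg, hp.coeff_natDegree, add_zero]
  · simp [coeff_eq_zero_of_natDegree_lt (hdeg ▸ hm), hm.ne', (hn.trans hm).ne']

theorem Complex.eq_zero_of_eq_mul_conj_sub {f : ℕ → ℂ} {c : ℂ} {n : ℕ} (hc : ‖c‖ < 1)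
    (h : ∀ k, 1 ≤ k → k < n → f k = c * conj (f (n - k))) :
    ∀ k, 1 ≤ k → k < n → f k = 0 := by
  intro k hk1 hkn
  have h' : f (n - k) = c * conj (f k) := by
    simpa [Nat.sub_sub_self hkn.le] using h (n - k) (by omega) (by omega)
  have hfix : f k = (‖c‖ : ℂ) ^ 2 * f k := calc
    f k = c * conj (f (n - k)) := h k hk1 hkn
    _ = c * conj c * f k := by rw [h', map_mul, conj_conj, mul_assoc]
    _ = (‖c‖ : ℂ) ^ 2 * f k := by rw [mul_conj, normSq_eq_norm_sq]; push_cast; rfl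
  have hc2 : (‖c‖ : ℂ) ^ 2 ≠ 1 := by
    exact_mod_cast (pow_lt_one₀ (norm_nonneg c) hc two_ne_zero).ne
  have hmul : (1 - (‖c‖ : ℂ) ^ 2) * f k = 0 := by linear_combination hfix
  exact (mul_eq_zero.mp hmul).resolve_left (sub_ne_zero.mpr hc2.symm)

section Blaschke

noncomputable def blaschkeNumerator {n : ℕ} (a : Fin n → ℂ) : ℂ[X] := ∏ j, (X - C (a j))

noncomputable def blaschkeDenominator {n : ℕ} (a : Fin n → ℂ) : ℂ[X] :=
  ∏ j, (1 - C (conj (a j)) * X)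

variable {n : ℕ} {a : Fin n → ℂ}

theorem blaschkeDenominator_eq_reflect :
    blaschkeDenominator a = reflect n ((blaschkeNumerator a).map (starRingEnd ℂ)) := by
  simpa [blaschkeNumerator, blaschkeDenominator, Polynomial.map_prod] using
    (reflect_prod_X_sub_C univ fun j => conj (a j)).symm

theorem coeff_blaschkeDenominator {k : ℕ} (hk : k ≤ n) :
    (blaschkeDenominator a).coeff k = conj ((blaschkeNumerator a).coeff (n - k)) := by
  rw [blaschkeDenominator_eq_reflect, coeff_reflect, revAt_le hk, coeff_map]

theorem eval_blaschkeDenominator_zero : (blaschkeDenominator a).eval 0 = 1 := by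
  simp [blaschkeDenominator, eval_prod]

theorem eval_blaschkeDenominator_ne_zero (ha : ∀ j, a j ∈ unitDisk) {z : ℂ} (hz : z ∈ unitDisk) :
    (blaschkeDenominator a).eval z ≠ 0 := by
  simp only [blaschkeDenominator, eval_prod, eval_sub, eval_one, eval_mul, eval_C, eval_X]
  refine prod_ne_zero_iff.mpr fun j _ => sub_ne_zero.mpr fun h => ?_
  have : ‖conj (a j) * z‖ < 1 := by
    rw [norm_mul, Complex.norm_conj]
    exact mul_lt_one_of_nonneg_of_lt_one_left (norm_nonneg _) (ha j) hz.le
  simp [← h] at this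

theorem monic_blaschkeNumerator : (blaschkeNumerator a).Monic :=
  monic_prod_of_monic _ _ fun j _ => monic_X_sub_C (a j)

theorem natDegree_blaschkeNumerator : (blaschkeNumerator a).natDegree = n := by
  simp [blaschkeNumerator]

theorem norm_coeff_zero_blaschkeNumerator_lt_one (hn : 0 < n) (ha : ∀ j, a j ∈ unitDisk) :
    ‖(blaschkeNumerator a).coeff 0‖ < 1 := by
  obtain ⟨m, rfl⟩ := Nat.exists_eq_add_one.mpr hn
  rw [blaschkeNumerator, coeff_zero_eq_eval_zero, eval_prod, norm_prod, Fin.prod_univ_succ]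
  simp only [eval_sub, eval_X, eval_C, zero_sub, norm_neg]
  exact mul_lt_one_of_nonneg_of_lt_one_left (norm_nonneg _) (ha 0)
    (prod_le_one (fun j _ => norm_nonneg _) fun (j : Fin m) _ => (ha j.succ).le)

theorem blaschkeNumerator_eq_X_pow_add_C (hn : 0 < n) (ha : ∀ j, a j ∈ unitDisk) {lam : ℂ}
    (hlam : lam ≠ 0)
    (hcrit : ∀ k, 1 ≤ k → k < n → iteratedDeriv k
      (fun z => (C lam * blaschkeNumerator a).eval z / (blaschkeDenominator a).eval z) 0 = 0) :
    blaschkeNumerator a = X ^ n + C ((blaschkeNumerator a).coeff 0) := by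
  set N := blaschkeNumerator a
  have hsymm : ∀ k, 1 ≤ k → k < n → N.coeff k = N.coeff 0 * conj (N.coeff (n - k)) := by
    intro k hk1 hkn
    have h := coeff_sub_C_mul_eq_zero (by simp [eval_blaschkeDenominator_zero]) hcrit k hkn
    rw [coeff_sub, coeff_C_mul, coeff_C_mul, eval_mul, eval_C, eval_blaschkeDenominator_zero,
      div_one, ← coeff_zero_eq_eval_zero, coeff_blaschkeDenominator hkn.le, sub_eq_zero,
      mul_assoc] at h
    exact mul_left_cancel₀ hlam h
  exact eq_X_pow_add_C_of_coeff_eq_zero hn monic_blaschkeNumerator natDegree_blaschkeNumerator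
    (eq_zero_of_eq_mul_conj_sub (norm_coeff_zero_blaschkeNumerator_lt_one hn ha) hsymm)

end Blaschke

/-- Let `B` be a finite Blaschke product of degree `n ≥ 2` such that `B'`
has a zero of order `n-1` at the origin (i.e. all critical points of `B` in the disk are
at `0`). Then the zeros of `B` are the n-th roots of a single complex number; in
particular they are equally spaced on a circle centered at the origin. -/
theorem stmt13 (n : ℕ) (hn : 2 ≤ n) (lam : ℂ) (hlam : ‖lam‖ = 1)
    (a : Fin n → ℂ) (ha : ∀ j, a j ∈ unitDisk)
    (B : ℂ → ℂ)
    (hB : ∀ z : ℂ, B z = lam * ∏ j, (z - a j) / (1 - (starRingEnd ℂ) (a j) * z))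
    (hcrit : ∀ k : ℕ, 1 ≤ k → k ≤ n - 1 → iteratedDeriv k B 0 = 0) :
    ∃ w : ℂ, ∀ z ∈ unitDisk, (B z = 0 ↔ z ^ n = w) := by
  have hBND : B = fun z =>
      (C lam * blaschkeNumerator a).eval z / (blaschkeDenominator a).eval z := by
    funext z
    simp only [hB, blaschkeNumerator, blaschkeDenominator, eval_mul, eval_C, eval_prod, eval_sub,
      eval_X, eval_one, prod_div_distrib, mul_div_assoc]
  have hlam0 : lam ≠ 0 := norm_ne_zero_iff.mp (by rw [hlam]; exact one_ne_zero)
  have hN := blaschkeNumerator_eq_X_pow_add_C (by omega) ha hlam0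
    (hBND ▸ fun k hk1 hkn => hcrit k hk1 (by omega))
  refine ⟨-(blaschkeNumerator a).coeff 0, fun z hz => ?_⟩
  rw [hBND, div_eq_zero_iff, or_iff_left (eval_blaschkeDenominator_ne_zero ha hz), eval_mul,
    eval_C, mul_eq_zero, or_iff_right hlam0]
  conv_lhs => rw [hN]
  simp [eq_neg_iff_add_eq_zero]
end
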